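/- Fix s, t, k, d, q ∈ ℕ and let t' := (2d(k-1)(s+q-1)+1)(t-1)+1+sd. Let 𝓟 be a (k,d)*-shortcut system for a graph G and let G^𝓟 be the supergraph of G obtained by adding an edge vw for each vw-shortcut in 𝓟. If G^𝓟 contains a (1,q)-model of K_{s,t'}, then G contains a (1, q+(k-1)(s+q-1))-model of K_{s,t}. -/

import Mathlib

open SimpleGraph

/-- `x` is an internal vertex of the walk `w` from `u` to `v`. -/
def InternalVertex {V : Type*} {G : SimpleGraph V} {u v : V} (w : G.Walk u v) (x : V) : Prop :=
  x ∈ w.support ∧ x ≠ u ∧ x ≠ v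

/-- `P` is a `(k,d)*`-shortcut system for `G`: a set of non-trivial paths of length at most `k`,
such that for every vertex `v`, the set `M_v` of endpoints of shortcuts having `v` as an
internal vertex has size at most `d`. -/
def IsKDStarShortcutSystem {V : Type*} (G : SimpleGraph V)
    (P : Set (Σ u : V, Σ v : V, G.Walk u v)) (k d : ℕ) : Prop :=
  (∀ p ∈ P, p.2.2.IsPath ∧ 1 ≤ p.2.2.length ∧ p.2.2.length ≤ k) ∧
  (∀ x : V, {u : V | ∃ p ∈ P, InternalVertex p.2.2 x ∧ (u = p.1 ∨ u = p.2.1)}.ncard ≤ d)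

/-- The graph `G^P` obtained from `G` by adding an edge `vw` for each `vw`-shortcut in `P`. -/
def shortcutGraph {V : Type*} (G : SimpleGraph V)
    (P : Set (Σ u : V, Σ v : V, G.Walk u v)) : SimpleGraph V :=
  SimpleGraph.fromRel (fun a b => G.Adj a b ∨ ∃ p ∈ P, p.1 = a ∧ p.2.1 = b)

/-- `G` contains a `(p,q)`-model of `K_{s,t}`. -/
def HasPQModel {V : Type*} (G : SimpleGraph V) (p q s t : ℕ) : Prop :=
  ∃ (X : Fin s → Set V) (Y : Fin t → Set V),
    (∀ i, (G.induce (X i)).Connected ∧ (X i).ncard ≤ p) ∧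
    (∀ j, (G.induce (Y j)).Connected ∧ (Y j).ncard ≤ q) ∧
    (∀ i i', i ≠ i' → Disjoint (X i) (X i')) ∧
    (∀ j j', j ≠ j' → Disjoint (Y j) (Y j')) ∧
    (∀ i j, Disjoint (X i) (Y j)) ∧
    (∀ i j, ∃ a ∈ X i, ∃ b ∈ Y j, G.Adj a b)

/-!
An edge `ab` of `G^𝓟` is an edge of `G` or joins the ends of a shortcut, so it is realised by a
`G`-path with at most `k - 1` internal vertices `v`, each satisfying `a, b ∈ M_v`. In the
`(1,q)`-model of `K_{s,t'}` in `G^𝓟` the `X_i` are singletons `{x_i}`. Each branch set `Y_j`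
is grown into a `G`-connected set `Y'_j` by adding the internal vertices of the paths realising
a spanning tree of `Y_j` and one edge from every `x_i` into `Y_j`: at most `(k-1)(s+q-1)` new
vertices, each `v` of them with `M_v` meeting `Y_j`. As the `Y_j` are disjoint and `|M_v| ≤ d`,
a vertex lies in few of the `Y'_j`: at most `sd` of them contain some `x_i`, and each `Y'_j`
meets at most `2d(k-1)(s+q-1)` others. A greedy independent set of the overlap graph on the
remaining indices then gives `t` pairwise disjoint branch sets.
-/

open Function

namespace Set

variable {ι α : Type*}

lemma ncard_biUnion_le_mul {t : Set ι} (ht : t.Finite) {s : ι → Set α} {c : ℕ}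
    (hs : ∀ i ∈ t, (s i).ncard ≤ c) : (⋃ i ∈ t, s i).ncard ≤ t.ncard * c :=
  calc (⋃ i ∈ t, s i).ncard = (⋃ i ∈ ht.toFinset, s i).ncard := by simp
    _ ≤ ∑ i ∈ ht.toFinset, (s i).ncard := ht.toFinset.set_ncard_biUnion_le s
    _ ≤ ht.toFinset.card * c := Finset.sum_le_card_nsmul _ _ _ (by simpa using hs)
    _ = t.ncard * c := by rw [ncard_eq_toFinset_card t ht]

lemma ncard_setOf_inter_nonempty_le {Y : ι → Set α} (hY : Pairwise (Disjoint on Y))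
    {A : Set α} (hA : A.Finite) : {j | (A ∩ Y j).Nonempty}.ncard ≤ A.ncard := by
  classical
  rcases A.eq_empty_or_nonempty with rfl | ⟨a, -⟩
  · simp
  refine ncard_le_ncard_of_injOn (fun j => if h : (A ∩ Y j).Nonempty then h.some else a)
    (fun j (hj : (A ∩ Y j).Nonempty) => ?_)
    (fun j (hj : (A ∩ Y j).Nonempty) j' (hj' : (A ∩ Y j').Nonempty) h => ?_) hA
  · simpa only [dif_pos hj] using hj.some_mem.1
  · by_contra hne
    simp only [dif_pos hj, dif_pos hj'] at h
    exact (hY hne).ne_of_mem hj.some_mem.2 hj'.some_mem.2 h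

end Set

namespace SimpleGraph.Walk

variable {V : Type*} {G : SimpleGraph V} {a b : V}

lemma internalVertex_reverse {w : G.Walk a b} {v : V} :
    InternalVertex w.reverse v ↔ InternalVertex w v := by
  simp only [InternalVertex, support_reverse, List.mem_reverse]
  tauto

lemma setOf_mem_support_eq (w : G.Walk a b) :
    {v | v ∈ w.support} = insert a (insert b {v | InternalVertex w v}) := by
  ext v
  by_cases hva : v = a
  · simp [hva]
  by_cases hvb : v = b
  · simp [hvb]
  simp [InternalVertex, hva, hvb]

lemma ncard_internalVertex_le (w : G.Walk a b) (hab : a ≠ b) :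
    {v | InternalVertex w v}.ncard ≤ w.length - 1 := by
  classical
  have hsupp : {v | v ∈ w.support}.ncard ≤ w.length + 1 := by
    rw [← List.coe_toFinset, Set.ncard_coe_finset, ← w.length_support]
    exact List.toFinset_card_le _
  have hfin : {v | InternalVertex w v}.Finite :=
    w.support.finite_toSet.subset fun v hv => hv.1
  rw [w.setOf_mem_support_eq, Set.ncard_insert_of_notMem _ (hfin.insert b),
    Set.ncard_insert_of_notMem _ hfin] at hsupp
  · omega
  · exact fun hv => hv.2.2 rfl
  · rintro (rfl | hv)
    exacts [hab rfl, hv.2.1 rfl]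

lemma IsPath.setOf_mem_support_tail {w : G.Walk a b} (hw : w.IsPath) (hab : a ≠ b) :
    {v | v ∈ w.tail.support} = insert b {v | InternalVertex w v} := by
  have hsupp : w.support = a :: w.tail.support := by
    rw [support_tail_of_not_nil _ (not_nil_of_ne hab), cons_tail_support]
  have ha : a ∉ w.tail.support := by
    have := hw.support_nodup
    rw [hsupp, List.nodup_cons] at this
    exact this.1
  have hb : b ∈ w.tail.support := w.tail.end_mem_support
  ext v
  simp only [Set.mem_ofPred_eq, Set.mem_insert_iff, InternalVertex, hsupp, List.mem_cons]
  constructor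
  · intro hv
    by_cases hvb : v = b
    · exact Or.inl hvb
    · exact Or.inr ⟨Or.inr hv, fun hva => ha (hva ▸ hv), hvb⟩
  · rintro (rfl | ⟨rfl | hv, hva, -⟩)
    exacts [hb, (hva rfl).elim, hv]

end SimpleGraph.Walk

section

variable {V : Type*}

/-- The set `M_x` of the paper. -/
def shortcutEnds {G : SimpleGraph V} (P : Set (Σ u : V, Σ v : V, G.Walk u v)) (x : V) :
    Set V :=
  {u | ∃ p ∈ P, InternalVertex p.2.2 x ∧ (u = p.1 ∨ u = p.2.1)}

namespace SimpleGraph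

def IsRealizedIn (H G : SimpleGraph V) (M : V → Set V) (m : ℕ) : Prop :=
  ∀ ⦃a b⦄, H.Adj a b → ∃ w : G.Walk a b, w.IsPath ∧ {v | InternalVertex w v}.ncard ≤ m ∧
    ∀ v, InternalVertex w v → a ∈ M v ∧ b ∈ M v

lemma isRealizedIn_shortcutGraph {G : SimpleGraph V} {P : Set (Σ u : V, Σ v : V, G.Walk u v)}
    {k : ℕ} (hP : ∀ p ∈ P, p.2.2.IsPath ∧ p.2.2.length ≤ k) :
    (shortcutGraph G P).IsRealizedIn G (shortcutEnds P) (k - 1) := by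
  have realize : ∀ a b, a ≠ b → (G.Adj a b ∨ ∃ p ∈ P, p.1 = a ∧ p.2.1 = b) →
      ∃ w : G.Walk a b, w.IsPath ∧ {v | InternalVertex w v}.ncard ≤ k - 1 ∧
        ∀ v, InternalVertex w v → a ∈ shortcutEnds P v ∧ b ∈ shortcutEnds P v := by
    rintro a b hab (h | ⟨⟨a, b, w⟩, hw, rfl, rfl⟩)
    · have hint : ∀ v, ¬InternalVertex h.toWalk v := by
        simp only [InternalVertex, Adj.support_toWalk, List.mem_cons, List.not_mem_nil]
        tauto
      exact ⟨h.toWalk, by simp [h.ne], by simp [hint], fun v hv => (hint v hv).elim⟩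
    · exact ⟨w, (hP _ hw).1,
        (w.ncard_internalVertex_le hab).trans (Nat.sub_le_sub_right (hP _ hw).2 1),
        fun v hv => ⟨⟨_, hw, hv, Or.inl rfl⟩, ⟨_, hw, hv, Or.inr rfl⟩⟩⟩
  intro a b hadj
  obtain ⟨hab, h | h⟩ := (fromRel_adj _ a b).1 hadj
  · exact realize a b hab h
  · obtain ⟨w, hw, hwm, hwM⟩ := realize b a hab.symm h
    exact ⟨w.reverse, hw.reverse, by simpa only [Walk.internalVertex_reverse] using hwm,
      fun v hv => (hwM v (Walk.internalVertex_reverse.1 hv)).symm⟩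

end SimpleGraph

namespace SimpleGraph.IsRealizedIn

variable {G H : SimpleGraph V} {M : V → Set V} {m : ℕ}

lemma exists_attach (hH : H.IsRealizedIn G M m) {T : Set V} (hT : (G.induce T).Connected)
    {a b : V} (hb : b ∈ T) (hab : H.Adj a b) :
    ∃ I : Set V, I.ncard ≤ m ∧ (∀ v ∈ I, a ∈ M v ∧ b ∈ M v) ∧
      (G.induce (T ∪ I)).Connected ∧ (G.induce (insert a (T ∪ I))).Connected ∧
      ∃ c ∈ T ∪ I, G.Adj a c := by
  obtain ⟨w, hw, hwm, hwM⟩ := hH hab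
  have htail : T ∪ {v | v ∈ w.tail.support} = T ∪ {v | InternalVertex w v} := by
    rw [hw.setOf_mem_support_tail hab.ne, Set.union_insert,
      Set.insert_eq_of_mem (Set.mem_union_left _ hb)]
  have hsupp : T ∪ {v | v ∈ w.support} = insert a (T ∪ {v | InternalVertex w v}) := by
    rw [w.setOf_mem_support_eq, Set.union_insert, Set.union_insert,
      Set.insert_eq_of_mem (Set.mem_union_left _ hb)]
  refine ⟨_, hwm, hwM, ?_, ?_, w.snd, ?_, w.adj_snd (Walk.not_nil_of_ne hab.ne)⟩
  · rw [← htail]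
    exact induce_union_connected hT.preconnected w.tail.connected_induce_support.preconnected
      ⟨b, hb, w.tail.end_mem_support⟩
  · rw [← hsupp]
    exact induce_union_connected hT.preconnected w.connected_induce_support.preconnected
      ⟨b, hb, w.end_mem_support⟩
  · rw [← htail]
    exact Or.inr w.tail.start_mem_support

end SimpleGraph.IsRealizedIn

namespace SimpleGraph

lemma Connected.induce_diff_singleton {H : SimpleGraph V} {S : Set V} {v : S}
    (h : ((H.induce S).induce {v}ᶜ).Connected) : (H.induce (S \ {v.1})).Connected :=
  h.map ⟨fun x => ⟨x.1.1, x.1.2, fun hx => x.2 (Subtype.ext hx)⟩, fun hadj => hadj⟩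
    fun y => ⟨⟨⟨y.1, y.2.1⟩, fun h => y.2.2 (congrArg Subtype.val h)⟩, rfl⟩

namespace IsRealizedIn

variable {G H : SimpleGraph V} {M : V → Set V} {m : ℕ}

lemma exists_connected_superset (hH : H.IsRealizedIn G M m) {S : Set V} (hSfin : S.Finite)
    (hS : (H.induce S).Connected) :
    ∃ T, S ⊆ T ∧ (G.induce T).Connected ∧ T.ncard ≤ S.ncard + m * (S.ncard - 1) ∧
      ∀ v ∈ T \ S, (M v ∩ S).Nonempty := by
  obtain ⟨n, hn⟩ : ∃ n, S.ncard = n := ⟨_, rfl⟩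
  induction n generalizing S with
  | zero =>
    obtain ⟨⟨v, hv⟩⟩ := hS.nonempty
    exact absurd hn ((Set.ncard_pos hSfin).2 ⟨v, hv⟩).ne'
  | succ n ih =>
    have := hSfin.to_subtype
    rcases subsingleton_or_nontrivial S with hsub | hnt
    · have := hS.nonempty
      exact ⟨S, subset_rfl, ⟨Preconnected.of_subsingleton⟩, by omega, by simp⟩
    obtain ⟨v, hv⟩ := hS.exists_connected_induce_compl_singleton_of_finite_nontrivial
    obtain ⟨b, hvb⟩ := hS.preconnected.exists_adj_of_nontrivial v
    have hbS' : b.1 ∈ S \ {v.1} := ⟨b.2, fun h => hvb.ne (Subtype.ext h).symm⟩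
    have hS'n : (S \ {v.1}).ncard = n := by rw [Set.ncard_sdiff_singleton_of_mem v.2]; omega
    obtain ⟨T', hST', hT', hT'n, hT'M⟩ := ih hSfin.sdiff hv.induce_diff_singleton hS'n
    rw [hS'n] at hT'n
    obtain ⟨I, hIm, hIM, -, hconn, -⟩ := hH.exists_attach hT' (hST' hbS') hvb
    refine ⟨insert v.1 (T' ∪ I), fun u hu => ?_, hconn, ?_, ?_⟩
    · by_cases huv : u = v.1
      exacts [Or.inl huv, Or.inr (Or.inl (hST' ⟨hu, huv⟩))]
    · obtain _ | n := n
      · exact absurd ((Set.ncard_pos hSfin.sdiff).2 ⟨_, hbS'⟩) (by omega)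
      calc (insert v.1 (T' ∪ I)).ncard ≤ T'.ncard + I.ncard + 1 :=
            (Set.ncard_insert_le _ _).trans (Nat.add_le_add_right (Set.ncard_union_le _ _) 1)
        _ ≤ n + 1 + 1 + m * (n + 1) := by rw [Nat.add_sub_cancel] at hT'n; rw [Nat.mul_succ]; omega
        _ = _ := by rw [hn, Nat.add_sub_cancel]
    · rintro u ⟨rfl | hu | hu, huS⟩
      · exact (huS v.2).elim
      · exact (hT'M u ⟨hu, fun h => huS h.1⟩).mono (Set.inter_subset_inter_right _ Set.sdiff_subset)
      · exact ⟨v, (hIM u hu).1, v.2⟩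

lemma exists_connected_superset_adj (hH : H.IsRealizedIn G M m) {S T : Set V}
    (hT : (G.induce T).Connected) (hST : S ⊆ T) (A : Finset V)
    (hA : ∀ x ∈ A, ∃ b ∈ S, H.Adj x b) :
    ∃ T', T ⊆ T' ∧ (G.induce T').Connected ∧ T'.ncard ≤ T.ncard + m * A.card ∧
      (∀ x ∈ A, ∃ c ∈ T', G.Adj x c) ∧ ∀ v ∈ T' \ T, (M v ∩ S).Nonempty := by
  classical
  induction A using Finset.induction_on with
  | empty => exact ⟨T, subset_rfl, hT, by simp, by simp, by simp⟩
  | insert x A hxA ih =>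
    obtain ⟨T', hTT', hT', hT'n, hT'adj, hT'M⟩ :=
      ih fun y hy => hA y (Finset.mem_insert_of_mem hy)
    obtain ⟨b, hbS, hxb⟩ := hA x (Finset.mem_insert_self x A)
    obtain ⟨I, hIm, hIM, hconn, -, hadj⟩ := hH.exists_attach hT' (hTT' (hST hbS)) hxb
    refine ⟨T' ∪ I, hTT'.trans Set.subset_union_left, hconn, ?_, ?_, ?_⟩
    · calc (T' ∪ I).ncard ≤ T'.ncard + I.ncard := Set.ncard_union_le _ _
        _ ≤ T.ncard + m * (insert x A).card := by
          rw [Finset.card_insert_of_notMem hxA, Nat.mul_succ]; omega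
    · simp only [Finset.mem_insert, forall_eq_or_imp]
      exact ⟨hadj, fun y hy => (hT'adj y hy).imp fun c hc => ⟨Or.inl hc.1, hc.2⟩⟩
    · rintro v ⟨hv | hv, hvT⟩
      exacts [hT'M v ⟨hv, hvT⟩, ⟨b, (hIM v hv).2, hbS⟩]

lemma exists_expansion (hH : H.IsRealizedIn G M m) {ι : Type*} [Fintype ι] {S : Set V}
    (hSfin : S.Finite) (hS : (H.induce S).Connected) (x : ι → V)
    (hx : ∀ i, ∃ b ∈ S, H.Adj (x i) b) :
    ∃ T, S ⊆ T ∧ (G.induce T).Connected ∧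
      (T \ S).ncard ≤ m * (Fintype.card ι + S.ncard - 1) ∧
      (∀ i, ∃ c ∈ T, G.Adj (x i) c) ∧ ∀ v ∈ T \ S, (M v ∩ S).Nonempty := by
  classical
  obtain ⟨T, hST, hT, hTn, hTM⟩ := hH.exists_connected_superset hSfin hS
  obtain ⟨T', hTT', hT', hT'n, hT'adj, hT'M⟩ :=
    hH.exists_connected_superset_adj hT hST (Finset.univ.image x) (by simpa using hx)
  refine ⟨T', hST.trans hTT', hT', ?_, fun i => hT'adj _ (by simp), fun v hv => ?_⟩
  · obtain ⟨⟨u, hu⟩⟩ := hS.nonempty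
    have hS1 : 1 ≤ S.ncard := (Set.ncard_pos hSfin).2 ⟨u, hu⟩
    have hA := Nat.mul_le_mul_left m (Finset.card_image_le (s := Finset.univ) (f := x))
    rw [Set.ncard_sdiff (hST.trans hTT') hSfin]
    calc T'.ncard - S.ncard ≤ m * (S.ncard - 1) + m * Fintype.card ι := by
          rw [Finset.card_univ] at hA
          omega
      _ = _ := by rw [← mul_add]; congr 1; omega
  · by_cases hvT : v ∈ T
    exacts [hTM v ⟨hvT, hv.2⟩, hT'M v ⟨hv.1, hvT⟩]

end IsRealizedIn

end SimpleGraph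

end

namespace SimpleGraph

variable {ι α : Type*}

lemma exists_isIndepSet_subset_card_le_mul [Finite ι] (Γ : SimpleGraph ι) {D : ℕ}
    (hD : ∀ i, (Γ.neighborSet i).ncard ≤ D) (A : Finset ι) :
    ∃ T ⊆ A, Γ.IsIndepSet (T : Set ι) ∧ A.card ≤ (D + 1) * T.card := by
  classical
  induction A using Finset.strongInduction with
  | H A ih =>
  rcases A.eq_empty_or_nonempty with rfl | ⟨a, ha⟩
  · exact ⟨∅, subset_rfl, by simp, by simp⟩
  set B := A.filter fun b => b ≠ a ∧ ¬Γ.Adj a b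
  obtain ⟨T, hTB, hT, hBT⟩ := ih B (Finset.filter_ssubset.2 ⟨a, ha, by simp⟩)
  have haT : a ∉ T := fun h => by simpa using (Finset.mem_filter.1 (hTB h)).2
  refine ⟨insert a T, Finset.insert_subset ha (hTB.trans (Finset.filter_subset _ _)), ?_, ?_⟩
  · rw [Finset.coe_insert, IsIndepSet, Set.pairwise_insert]
    refine ⟨hT, fun b hb _ => ?_⟩
    have hab := (Finset.mem_filter.1 (hTB hb)).2.2
    exact ⟨hab, fun h => hab h.symm⟩
  · have hnbr : (A.filter (Γ.Adj a)).card ≤ D := by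
      rw [← Set.ncard_coe_finset]
      exact (Set.ncard_le_ncard fun b hb => (Finset.mem_filter.1 hb).2).trans (hD a)
    have hAB : A ⊆ B ∪ insert a (A.filter (Γ.Adj a)) := by
      intro b hb
      by_cases hba : b = a
      · simp [hba]
      by_cases hab : Γ.Adj a b
      · simp [hb, hab]
      · simp [B, hb, hba, hab]
    calc A.card ≤ B.card + (A.filter (Γ.Adj a)).card + 1 :=
          (Finset.card_le_card hAB).trans ((Finset.card_union_le _ _).trans
            (by rw [add_assoc]; exact Nat.add_le_add_left (Finset.card_insert_le _ _) _))
      _ ≤ (D + 1) * (insert a T).card := by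
          rw [Finset.card_insert_of_notMem haT, Nat.mul_succ]; omega

def overlapGraph (Y : ι → Set α) : SimpleGraph ι where
  Adj i j := i ≠ j ∧ ¬Disjoint (Y i) (Y j)
  symm := ⟨fun _ _ h => ⟨h.1.symm, fun hd => h.2 hd.symm⟩⟩
  loopless := ⟨fun _ h => h.1 rfl⟩

@[simp]
lemma overlapGraph_adj {Y : ι → Set α} {i j : ι} :
    (overlapGraph Y).Adj i j ↔ i ≠ j ∧ ¬Disjoint (Y i) (Y j) :=
  Iff.rfl

variable [Finite ι] [Finite α] {Y Y' : ι → Set α} {M : α → Set α} {d : ℕ}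

lemma ncard_neighborSet_overlapGraph_le {q m : ℕ} (hY : Pairwise (Disjoint on Y))
    (hM : ∀ v, (M v).ncard ≤ d) (hZ : ∀ j, ∀ v ∈ Y' j \ Y j, (M v ∩ Y j).Nonempty)
    (hYq : ∀ j, (Y j).ncard ≤ q) (hZm : ∀ j, (Y' j \ Y j).ncard ≤ m) (hqm : m = 0 ∨ q ≤ m)
    (j : ι) : ((overlapGraph Y').neighborSet j).ncard ≤ 2 * d * m := by
  have hsub : (overlapGraph Y').neighborSet j ⊆
      (⋃ v ∈ Y' j \ Y j, {j' | v ∈ Y' j'} \ {j}) ∪ ⋃ v ∈ Y j, {j' | v ∈ Y' j' \ Y j'} := by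
    intro j' hj'
    obtain ⟨hne, hnd⟩ := overlapGraph_adj.1 hj'
    obtain ⟨v, hv, hv'⟩ := Set.not_disjoint_iff.1 hnd
    by_cases hvY : v ∈ Y j
    · exact Or.inr (Set.mem_biUnion hvY ⟨hv', fun h => (hY hne).ne_of_mem hvY h rfl⟩)
    · exact Or.inl (Set.mem_biUnion ⟨hv, hvY⟩ ⟨hv', fun h => hne h.symm⟩)
  have hfirst : ∀ v ∈ Y' j \ Y j, ({j' | v ∈ Y' j'} \ {j}).ncard ≤ d := by
    intro v hv
    have hmeet : ∀ j', (M v ∩ Y j').Nonempty → (insert v (M v) ∩ Y j').Nonempty :=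
      fun j' h => h.mono (Set.inter_subset_inter_left _ (Set.subset_insert _ _))
    have hsub' : {j' | v ∈ Y' j'} ⊆ {j' | (insert v (M v) ∩ Y j').Nonempty} := by
      intro j' hj'
      by_cases hvY : v ∈ Y j'
      exacts [⟨v, Set.mem_insert _ _, hvY⟩, hmeet j' (hZ j' v ⟨hj', hvY⟩)]
    calc ({j' | v ∈ Y' j'} \ {j}).ncard
        ≤ ({j' | (insert v (M v) ∩ Y j').Nonempty} \ {j}).ncard :=
          Set.ncard_le_ncard (Set.sdiff_subset_sdiff_left hsub')
      _ = {j' | (insert v (M v) ∩ Y j').Nonempty}.ncard - 1 :=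
          Set.ncard_sdiff_singleton_of_mem (hmeet j (hZ j v hv))
      _ ≤ (insert v (M v)).ncard - 1 :=
          Nat.sub_le_sub_right (Set.ncard_setOf_inter_nonempty_le hY (Set.toFinite _)) 1
      _ ≤ d := by have := Set.ncard_insert_le v (M v); have := hM v; omega
  have hsecond : (⋃ v ∈ Y j, {j' | v ∈ Y' j' \ Y j'}).ncard ≤ m * d := by
    rcases hqm with rfl | hqm
    · have hZ0 : ∀ j', Y' j' \ Y j' = ∅ := fun j' =>
        (Set.ncard_eq_zero (Set.toFinite _)).1 (Nat.le_zero.1 (hZm j'))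
      simp [hZ0]
    calc _ ≤ (Y j).ncard * d := Set.ncard_biUnion_le_mul (Set.toFinite _) fun v _ =>
          (Set.ncard_le_ncard fun j' hj' => hZ j' v hj').trans
            ((Set.ncard_setOf_inter_nonempty_le hY (Set.toFinite _)).trans (hM v))
      _ ≤ m * d := Nat.mul_le_mul_right _ ((hYq j).trans hqm)
  calc _ ≤ _ := Set.ncard_le_ncard hsub
    _ ≤ _ := Set.ncard_union_le _ _
    _ ≤ m * d + m * d := add_le_add ((Set.ncard_biUnion_le_mul (Set.toFinite _) hfirst).trans
          (Nat.mul_le_mul_right _ (hZm j))) hsecond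
    _ = 2 * d * m := by ring

end SimpleGraph

section

variable {ι α κ : Type*} [Finite ι] [Finite α] [Finite κ] {Y Y' : ι → Set α} {M : α → Set α}
  {d : ℕ}

lemma ncard_setOf_exists_mem_le (hY : Pairwise (Disjoint on Y)) (hM : ∀ v, (M v).ncard ≤ d)
    (hZ : ∀ j, ∀ v ∈ Y' j \ Y j, (M v ∩ Y j).Nonempty) (x : κ → α) (hxY : ∀ i j, x i ∉ Y j) :
    {j | ∃ i, x i ∈ Y' j}.ncard ≤ Nat.card κ * d := by
  have hsub : {j | ∃ i, x i ∈ Y' j} ⊆ ⋃ i ∈ Set.univ, {j | (M (x i) ∩ Y j).Nonempty} := by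
    rintro j ⟨i, hi⟩
    exact Set.mem_biUnion (Set.mem_univ i) (hZ j (x i) ⟨hi, hxY i j⟩)
  calc _ ≤ _ := Set.ncard_le_ncard hsub
    _ ≤ (Set.univ : Set κ).ncard * d := Set.ncard_biUnion_le_mul Set.finite_univ fun i _ =>
          (Set.ncard_setOf_inter_nonempty_le hY (Set.toFinite _)).trans (hM _)
    _ = _ := by rw [Set.ncard_univ]

end

namespace SimpleGraph

variable {ι : Type*}

lemma exists_embedding_fin_pairwise_not_adj [Finite ι] (Γ : SimpleGraph ι) {D t : ℕ}
    (hD : ∀ i, (Γ.neighborSet i).ncard ≤ D) (B : Set ι)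
    (hB : (D + 1) * (t - 1) + B.ncard < Nat.card ι) :
    ∃ f : Fin t ↪ ι, (∀ j, f j ∉ B) ∧ Pairwise fun j j' => ¬Γ.Adj (f j) (f j') := by
  obtain ⟨T, hTB, hT, hBT⟩ :=
    Γ.exists_isIndepSet_subset_card_le_mul hD (Set.toFinite Bᶜ).toFinset
  have htT : t ≤ T.card := by
    have hcompl := Set.ncard_add_ncard_compl B
    rw [Set.ncard_eq_toFinset_card Bᶜ] at hcompl
    have := Nat.lt_of_mul_lt_mul_left ((by omega : (D + 1) * (t - 1) < _).trans_le hBT)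
    omega
  obtain ⟨T', hT'T, hT'⟩ := Finset.exists_subset_card_eq htT
  let e := (T'.equivFinOfCardEq hT').symm
  refine ⟨e.toEmbedding.trans (Function.Embedding.subtype _),
    fun j => (Set.Finite.mem_toFinset _).1 (hTB (hT'T (e j).2)),
    fun j j' hne => hT (hT'T (e j).2) (hT'T (e j').2) ?_⟩
  exact fun h => hne (e.injective (Subtype.ext h))

end SimpleGraph

lemma hasPQModel_one_iff {V : Type*} [Finite V] {G : SimpleGraph V} {q s t : ℕ} :
    HasPQModel G 1 q s t ↔ ∃ (x : Fin s → V) (Y : Fin t → Set V), Function.Injective x ∧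
      (∀ j, (G.induce (Y j)).Connected ∧ (Y j).ncard ≤ q) ∧ Pairwise (Disjoint on Y) ∧
      (∀ i j, x i ∉ Y j) ∧ ∀ i j, ∃ b ∈ Y j, G.Adj (x i) b := by
  constructor
  · rintro ⟨X, Y, hX, hY, hXX, hYY, hXY, hadj⟩
    have hsingle : ∀ i, ∃ x, X i = {x} := fun i => by
      obtain ⟨⟨x, hx⟩⟩ := (hX i).1.nonempty
      exact ⟨x, (Set.ncard_le_one_iff_subsingleton.1 (hX i).2).eq_singleton_of_mem hx⟩
    choose x hx using hsingle
    refine ⟨x, Y, fun i i' h => ?_, hY, fun j j' h => hYY j j' h, fun i j h => ?_, fun i j => ?_⟩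
    · by_contra hne
      exact Set.disjoint_left.1 (hXX i i' hne) (by simp [hx] : x i ∈ X i) (by simp [hx, h])
    · exact (hXY i j).ne_of_mem (by simp [hx]) h rfl
    · obtain ⟨a, ha, b, hb, hab⟩ := hadj i j
      rw [hx i, Set.mem_singleton_iff] at ha
      exact ⟨b, hb, ha ▸ hab⟩
  · rintro ⟨x, Y, hx, hY, hYY, hxY, hadj⟩
    refine ⟨fun i => {x i}, Y, fun i => ⟨?_, by simp⟩, hY,
      fun i i' h => Set.disjoint_singleton.2 (hx.ne h), fun j j' h => hYY h,
      fun i j => Set.disjoint_singleton_left.2 (hxY i j), fun i j => ?_⟩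
    · simp
    · obtain ⟨b, hb, hab⟩ := hadj i j
      exact ⟨x i, rfl, b, hb, hab⟩

theorem stmt14 {V : Type} [Finite V] (s t k d q : ℕ)
    (hs : 1 ≤ s)
    (G : SimpleGraph V) (P : Set (Σ u : V, Σ v : V, G.Walk u v))
    (hP : IsKDStarShortcutSystem G P k d)
    (hmodel : HasPQModel (shortcutGraph G P) 1 q s
      ((2 * d * (k - 1) * (s + q - 1) + 1) * (t - 1) + 1 + s * d)) :
    HasPQModel G 1 (q + (k - 1) * (s + q - 1)) s t := by
  obtain ⟨x, Y, hx, hY, hYY, hxY, hadj⟩ := hasPQModel_one_iff.1 hmodel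
  have hH := isRealizedIn_shortcutGraph fun p hp => ⟨(hP.1 p hp).1, (hP.1 p hp).2.2⟩
  choose Y' _ hY'conn hY'card hxY' hY'M using fun j =>
    hH.exists_expansion (Set.toFinite (Y j)) (hY j).1 x (hadj · j)
  have hZ : ∀ j, (Y' j \ Y j).ncard ≤ (k - 1) * (s + q - 1) := fun j =>
    (hY'card j).trans (Nat.mul_le_mul_left _ (by
      have := (hY j).2
      simp only [Fintype.card_fin]
      omega))
  have hdeg : ∀ j, ((overlapGraph Y').neighborSet j).ncard ≤ 2 * d * (k - 1) * (s + q - 1) := by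
    intro j
    refine (ncard_neighborSet_overlapGraph_le hYY hP.2 hY'M (fun j => (hY j).2) hZ ?_ j).trans_eq
      (by ring)
    rcases Nat.eq_zero_or_pos (k - 1) with hk | hk
    · simp [hk]
    · exact Or.inr ((by omega : q ≤ s + q - 1).trans (Nat.le_mul_of_pos_left _ hk))
  obtain ⟨f, hfgood, hf⟩ := (overlapGraph Y').exists_embedding_fin_pairwise_not_adj (t := t) hdeg
    {j | ∃ i, x i ∈ Y' j} (by
      have := ncard_setOf_exists_mem_le hYY hP.2 hY'M x hxY
      simp only [Nat.card_fin] at this ⊢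
      omega)
  refine hasPQModel_one_iff.2 ⟨x, Y' ∘ f, hx, fun j => ⟨hY'conn _, ?_⟩,
    fun j j' hne => ?_, fun i j h => hfgood j ⟨i, h⟩, fun i j => hxY' (f j) i⟩
  · exact (Set.ncard_le_ncard_sdiff_add_ncard _ (Y (f j))).trans
      ((Nat.add_le_add (hZ (f j)) (hY (f j)).2).trans_eq (add_comm _ _))
  · simpa [Function.onFun, f.injective.ne hne] using hf hne
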